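/- arXiv:0809.4726 — 2 statements merged into one kernel-verified Lean document; each statement's English description precedes it below -/
import Mathlib

section
/- Fix 0 < p < 1 and for τ ≥ 0 let κ_p(τ) denote the unique κ > τ/p with (κ/2)·Λ*(τ/κ) = 1. Then the function τ ↦ κ_p(τ) is continuous and strictly increasing on [0, ∞), satisfies κ_p(0) = 2/ln(1/(1−p)), and κ_p(τ) ~ τ/p as τ → ∞ (i.e. p·κ_p(τ)/τ → 1). -/
open MeasureTheory Filter
open scoped ENNReal NNReal

/-- The Bernoulli(p) measure on `Bool`. -/
noncomputable def bernoulliBool (p : ℝ) : Measure Bool :=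
  p.toNNReal • Measure.dirac true + (1 - p).toNNReal • Measure.dirac false

instance (p : ℝ) : IsFiniteMeasure (bernoulliBool p) := by
  unfold bernoulliBool; infer_instance

instance (n : ℕ) : MeasurableSpace (SimpleGraph (Fin n)) := ⊤

/-- The Erdős–Rényi random graph `G(n,p)`: the distribution of the simple graph on `Fin n`
obtained by including each possible edge independently with probability `p`. -/
noncomputable def erMeasure (n : ℕ) (p : ℝ) : Measure (SimpleGraph (Fin n)) :=
  Measure.map (fun f : Sym2 (Fin n) → Bool => SimpleGraph.fromEdgeSet {e | f e = true})
    (Measure.pi fun _ : Sym2 (Fin n) => bernoulliBool p)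

/-- A set `S` of vertices is `t`-dependent if the induced subgraph has maximum degree at most `t`,
i.e. every vertex of `S` has at most `t` neighbours inside `S`. -/
def IsTDependent {V : Type*} (G : SimpleGraph V) (t : ℕ) (S : Set V) : Prop :=
  ∀ v ∈ S, {u ∈ S | G.Adj v u}.ncard ≤ t

/-- The `t`-improper chromatic number: the least number of colours in a vertex colouring
in which every colour class is `t`-dependent. -/
noncomputable def improperChromaticNumber {V : Type*} (G : SimpleGraph V) (t : ℕ) : ℕ :=
  sInf {k | ∃ c : V → Fin k, ∀ i : Fin k, IsTDependent G t {v | c v = i}}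

/-- The `t`-dependence number: the maximum size of a `t`-dependent set. -/
noncomputable def tDependenceNumber {V : Type*} (G : SimpleGraph V) (t : ℕ) : ℕ :=
  sSup {m | ∃ S : Set V, S.ncard = m ∧ IsTDependent G t S}

/-- The Fenchel–Legendre transform `Λ*(x) = x ln(x/p) + (1-x) ln((1-x)/(1-p))`
(with the conventions `Λ*(0) = ln(1/(1-p))`, `Λ*(1) = ln(1/p)`, which hold automatically
since `Real.log 0 = 0` in Lean). -/
noncomputable def LambdaStar (p x : ℝ) : ℝ :=
  x * Real.log (x / p) + (1 - x) * Real.log ((1 - x) / (1 - p))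

/-!
With `x = τ/κ` the equation reads `(τ/2)·Λ*(x)/x = 1`. On `[0, p]` both `Λ*` (down to `Λ*(p) = 0`)
and `Λ*(x)/x` are strictly decreasing, so `(κ/2)·Λ*(τ/κ)` is strictly increasing in `κ > τ/p` and
strictly decreasing in `τ ∈ [0, pκ]`; together these make `κ_p` strictly increasing. By the
intermediate value theorem in `τ`, `κ_p` takes every value `≥ κ_p(0)`, and a strictly monotone map
onto a half-line is continuous. Finally `κ_p(τ) > τ/p`, while for `c > 1` and large `τ` the left side
at `κ = cτ/p`, namely `(cτ/2p)·Λ*(p/c)`, already exceeds `1`, forcing `κ_p(τ) ≤ cτ/p`.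
-/

open Real Set

theorem StrictMonoOn.continuousOn_Ici_of_surjOn {α β : Type*} [LinearOrder α] [TopologicalSpace α]
    [OrderTopology α] [LinearOrder β] [TopologicalSpace β] [OrderTopology β] {f : α → β} {a : α}
    (hf : StrictMonoOn f (Ici a)) (hsurj : SurjOn f (Ici a) (Ici (f a))) :
    ContinuousOn f (Ici a) := by
  intro x hx
  rcases (mem_Ici.1 hx).eq_or_lt with rfl | hax
  · exact hf.continuousWithinAt_right_of_surjOn self_mem_nhdsWithin
      (hsurj.mono subset_rfl Ioi_subset_Ici_self)
  refine (hf.continuousAt_of_exists_between (Ici_mem_nhds hax) (fun b hb => ?_)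
    (fun b hb => ?_)).continuousWithinAt
  · by_cases hba : b ≤ f a
    · exact ⟨a, self_mem_Ici, hba, hf self_mem_Ici hx hax⟩
    · obtain ⟨c, hc, rfl⟩ := hsurj (le_of_not_ge hba)
      exact ⟨c, hc, le_rfl, hb⟩
  · obtain ⟨c, hc, rfl⟩ := hsurj (hf.monotoneOn self_mem_Ici hx hax.le |>.trans hb.le)
    exact ⟨c, hc, hb, le_rfl⟩

theorem LambdaStar_zero (p : ℝ) : LambdaStar p 0 = log (1 / (1 - p)) := by
  simp [LambdaStar]

theorem LambdaStar_self (p : ℝ) : LambdaStar p p = 0 := by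
  rcases eq_or_ne p 0 with rfl | hp0
  · simp [LambdaStar]
  rcases eq_or_ne p 1 with rfl | hp1
  · simp [LambdaStar]
  simp [LambdaStar, hp0, sub_ne_zero.2 hp1.symm]

section LambdaStar

variable {p : ℝ}

theorem LambdaStar_eq_neg_binEntropy (hp0 : p ≠ 0) (hp1 : p ≠ 1) (x : ℝ) :
    LambdaStar p x = -binEntropy x - x * log p - (1 - x) * log (1 - p) := by
  have mul_log_div (a b : ℝ) (hb : b ≠ 0) : a * log (a / b) = a * log a - a * log b := by
    rcases eq_or_ne a 0 with rfl | ha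
    · simp
    · rw [log_div ha hb]; ring
  rw [LambdaStar, binEntropy, mul_log_div x p hp0, mul_log_div _ _ (sub_ne_zero.2 hp1.symm),
    log_inv, log_inv]
  ring

theorem continuous_LambdaStar (hp0 : p ≠ 0) (hp1 : p ≠ 1) : Continuous (LambdaStar p) := by
  rw [funext (LambdaStar_eq_neg_binEntropy hp0 hp1)]
  fun_prop

theorem hasDerivAt_LambdaStar (hp0 : p ≠ 0) (hp1 : p ≠ 1) {x : ℝ} (hx0 : x ≠ 0) (hx1 : x ≠ 1) :
    HasDerivAt (LambdaStar p) (log (x / p) - log ((1 - x) / (1 - p))) x := by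
  rw [funext (LambdaStar_eq_neg_binEntropy hp0 hp1)]
  refine (((hasDerivAt_binEntropy hx0 hx1).neg.sub ((hasDerivAt_id' x).mul_const (log p))).sub
    (((hasDerivAt_const x 1).sub (hasDerivAt_id' x)).mul_const (log (1 - p)))).congr_deriv ?_
  rw [log_div hx0 hp0, log_div (sub_ne_zero.2 hx1.symm) (sub_ne_zero.2 hp1.symm)]
  ring

theorem log_one_sub_div_one_sub_pos {x : ℝ} (hxp : x < p) (hp1 : p < 1) :
    0 < log ((1 - x) / (1 - p)) :=
  log_pos ((one_lt_div (by linarith)).2 (by linarith))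

theorem strictAntiOn_LambdaStar (hp0 : 0 < p) (hp1 : p < 1) :
    StrictAntiOn (LambdaStar p) (Icc 0 p) := by
  refine strictAntiOn_of_deriv_neg (convex_Icc 0 p)
    (continuous_LambdaStar hp0.ne' hp1.ne).continuousOn fun x hx => ?_
  rw [interior_Icc] at hx
  rw [(hasDerivAt_LambdaStar hp0.ne' hp1.ne hx.1.ne' (hx.2.trans hp1).ne).deriv]
  linarith [log_neg (div_pos hx.1 hp0) ((div_lt_one hp0).2 hx.2),
    log_one_sub_div_one_sub_pos hx.2 hp1]

theorem LambdaStar_pos (hp0 : 0 < p) (hp1 : p < 1) {x : ℝ} (hx0 : 0 ≤ x) (hxp : x < p) :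
    0 < LambdaStar p x := by
  simpa [LambdaStar_self] using
    strictAntiOn_LambdaStar hp0 hp1 ⟨hx0, hxp.le⟩ ⟨hp0.le, le_rfl⟩ hxp

theorem strictAntiOn_LambdaStar_div (hp0 : 0 < p) (hp1 : p < 1) :
    StrictAntiOn (fun x => LambdaStar p x / x) (Ioc 0 p) := by
  refine strictAntiOn_of_deriv_neg (convex_Ioc 0 p)
    ((continuous_LambdaStar hp0.ne' hp1.ne).continuousOn.div continuousOn_id
      fun x hx => hx.1.ne') fun x hx => ?_
  rw [interior_Ioc] at hx
  have hderiv : HasDerivAt (fun y => LambdaStar p y / y) (-log ((1 - x) / (1 - p)) / x ^ 2) x :=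
    ((hasDerivAt_LambdaStar hp0.ne' hp1.ne hx.1.ne' (hx.2.trans hp1).ne).div (hasDerivAt_id' x)
      hx.1.ne').congr_deriv (by rw [LambdaStar]; ring)
  rw [hderiv.deriv]
  exact div_neg_of_neg_of_pos (neg_neg_of_pos (log_one_sub_div_one_sub_pos hx.2 hp1))
    (pow_pos hx.1 2)

end LambdaStar

noncomputable def kappaRate (p τ κ : ℝ) : ℝ :=
  κ / 2 * LambdaStar p (τ / κ)

section kappaRate

variable {p τ κ : ℝ}

theorem strictMonoOn_kappaRate (hp0 : 0 < p) (hp1 : p < 1) (hτ : 0 ≤ τ) :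
    StrictMonoOn (kappaRate p τ) (Ioi (τ / p)) := by
  intro κ₁ h₁ κ₂ h₂ h12
  have hκ₁ : 0 < κ₁ := (div_nonneg hτ hp0.le).trans_lt h₁
  rcases hτ.eq_or_lt with rfl | hτ
  · simpa [kappaRate] using
      mul_lt_mul_of_pos_right (by linarith : κ₁ / 2 < κ₂ / 2) (LambdaStar_pos hp0 hp1 le_rfl hp0)
  have hmem {κ : ℝ} (hκ : τ / p < κ) : τ / κ ∈ Ioc 0 p := by
    have hκ0 : 0 < κ := (div_pos hτ hp0).trans hκ
    exact ⟨div_pos hτ hκ0, ((div_lt_comm₀ hκ0 hp0).2 hκ).le⟩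
  have hrate {κ : ℝ} (hκ : 0 < κ) : kappaRate p τ κ = τ / 2 * (LambdaStar p (τ / κ) / (τ / κ)) := by
    rw [kappaRate]; field_simp
  rw [hrate hκ₁, hrate (hκ₁.trans h12)]
  exact mul_lt_mul_of_pos_left (strictAntiOn_LambdaStar_div hp0 hp1 (hmem h₂) (hmem h₁)
    (div_lt_div_of_pos_left hτ hκ₁ h12)) (half_pos hτ)

theorem strictAntiOn_kappaRate_left (hp0 : 0 < p) (hp1 : p < 1) (hκ : 0 < κ) :
    StrictAntiOn (fun τ => kappaRate p τ κ) (Icc 0 (p * κ)) := by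
  have hmaps : MapsTo (· / κ) (Icc 0 (p * κ)) (Icc 0 p) := fun τ hτ =>
    ⟨div_nonneg hτ.1 hκ.le, (div_le_iff₀ hκ).2 hτ.2⟩
  intro τ₁ h₁ τ₂ h₂ h12
  exact mul_lt_mul_of_pos_left (strictAntiOn_LambdaStar hp0 hp1 (hmaps h₁) (hmaps h₂)
    (div_lt_div_of_pos_right h12 hκ)) (half_pos hκ)

theorem continuous_kappaRate_left (hp0 : p ≠ 0) (hp1 : p ≠ 1) :
    Continuous (fun τ => kappaRate p τ κ) := by
  have := continuous_LambdaStar hp0 hp1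
  unfold kappaRate
  fun_prop

theorem le_of_kappaRate_eq_one (hp0 : 0 < p) (hp1 : p < 1) {c : ℝ} (hc : 1 < c)
    (hτ : 2 * p / (c * LambdaStar p (p / c)) ≤ τ) (hκ : τ / p < κ) (h : kappaRate p τ κ = 1) :
    κ ≤ c * τ / p := by
  have hB : 0 < LambdaStar p (p / c) := LambdaStar_pos hp0 hp1 (by positivity) (div_lt_self hp0 hc)
  have hτ0 : 0 < τ := lt_of_lt_of_le (by positivity) hτ
  by_contra! hlt
  have hcτ : τ / p < c * τ / p := by gcongr; exact lt_mul_of_one_lt_left hτ0 hc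
  have hge : 1 ≤ kappaRate p τ (c * τ / p) := by
    rw [div_le_iff₀ (by positivity)] at hτ
    rw [kappaRate, show τ / (c * τ / p) = p / c by field_simp,
      show c * τ / p / 2 * LambdaStar p (p / c) = τ * (c * LambdaStar p (p / c)) / (2 * p) by ring,
      le_div_iff₀ (by positivity)]
    linarith
  exact (strictMonoOn_kappaRate hp0 hp1 hτ0.le hcτ hκ hlt).not_ge (h ▸ hge)

end kappaRate

section kappaSolution

variable {p : ℝ} {κf : ℝ → ℝ}

theorem strictMonoOn_of_kappaRate_eq_one (hp0 : 0 < p) (hp1 : p < 1)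
    (hκf : ∀ τ, 0 ≤ τ → τ / p < κf τ ∧ kappaRate p τ (κf τ) = 1) :
    StrictMonoOn κf (Ici 0) := by
  intro τ₁ h₁ τ₂ h₂ h12
  by_contra! hle
  obtain ⟨hlt₂, heq₂⟩ := hκf τ₂ h₂
  have hlt₁ : τ₂ / p < κf τ₁ := hlt₂.trans_le hle
  have hτ₂ : τ₂ ≤ p * κf τ₁ := ((div_lt_iff₀' hp0).1 hlt₁).le
  have hκ₁ : 0 < κf τ₁ := (div_nonneg (mem_Ici.1 h₂) hp0.le).trans_lt hlt₁
  have : (1 : ℝ) < 1 := calc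
    1 = kappaRate p τ₂ (κf τ₂) := heq₂.symm
    _ ≤ kappaRate p τ₂ (κf τ₁) := (strictMonoOn_kappaRate hp0 hp1 h₂).monotoneOn hlt₂ hlt₁ hle
    _ < kappaRate p τ₁ (κf τ₁) := strictAntiOn_kappaRate_left hp0 hp1 hκ₁
      ⟨h₁, h12.le.trans hτ₂⟩ ⟨h₂, hτ₂⟩ h12
    _ = 1 := (hκf τ₁ h₁).2
  exact lt_irrefl _ this

theorem surjOn_of_kappaRate_eq_one (hp0 : 0 < p) (hp1 : p < 1)
    (hκf : ∀ τ, 0 ≤ τ → τ / p < κf τ ∧ kappaRate p τ (κf τ) = 1)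
    (hκuniq : ∀ τ, 0 ≤ τ → ∀ κ, τ / p < κ → kappaRate p τ κ = 1 → κ = κf τ) :
    SurjOn κf (Ici 0) (Ici (κf 0)) := by
  intro v hv
  obtain ⟨h0pos, h0eq⟩ := hκf 0 le_rfl
  have hv0 : 0 / p < v := h0pos.trans_le hv
  rw [zero_div] at hv0
  have hstart : 1 ≤ kappaRate p 0 v :=
    h0eq ▸ (strictMonoOn_kappaRate hp0 hp1 le_rfl).monotoneOn h0pos (by simpa using hv0) hv
  have hend : kappaRate p (p * v) v = 0 := by
    rw [kappaRate, mul_div_cancel_right₀ _ hv0.ne', LambdaStar_self, mul_zero]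
  obtain ⟨τ, hτ, hτeq⟩ := intermediate_value_Icc' (by positivity)
    (continuous_kappaRate_left hp0.ne' hp1.ne).continuousOn ⟨hend.symm ▸ zero_le_one, hstart⟩
  have hτlt : τ < p * v := hτ.2.lt_of_ne (by rintro rfl; exact zero_ne_one (hend.symm.trans hτeq))
  exact ⟨τ, hτ.1, (hκuniq τ hτ.1 v ((div_lt_iff₀' hp0).2 hτlt) hτeq).symm⟩

theorem tendsto_mul_div_of_kappaRate_eq_one (hp0 : 0 < p) (hp1 : p < 1)
    (hκf : ∀ τ, 0 ≤ τ → τ / p < κf τ ∧ kappaRate p τ (κf τ) = 1) :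
    Tendsto (fun τ => p * κf τ / τ) atTop (nhds 1) := by
  have hlower : ∀ᶠ τ in atTop, 1 < p * κf τ / τ :=
    (eventually_gt_atTop 0).mono fun τ hτ => by
      rw [lt_div_iff₀ hτ, one_mul]
      exact (div_lt_iff₀' hp0).1 (hκf τ hτ.le).1
  refine tendsto_order.2 ⟨fun a ha => hlower.mono fun τ h => ha.trans h, fun c hc => ?_⟩
  obtain ⟨c', hc', hc'c⟩ := exists_between hc
  filter_upwards [eventually_gt_atTop 0,
    eventually_ge_atTop (2 * p / (c' * LambdaStar p (p / c')))] with τ hτ0 hτ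
  obtain ⟨hlt, heq⟩ := hκf τ hτ0.le
  rw [div_lt_iff₀ hτ0]
  calc p * κf τ ≤ p * (c' * τ / p) := by gcongr; exact le_of_kappaRate_eq_one hp0 hp1 hc' hτ hlt heq
    _ = c' * τ := by field_simp
    _ < c * τ := by gcongr

end kappaSolution

/-- Fix `0 < p < 1` and let `κf` be the function assigning to each `τ ≥ 0`
the unique `κ > τ/p` with `(κ/2)·Λ*(τ/κ) = 1`.  Then `κf` is continuous and strictly
increasing on `[0,∞)`, `κf 0 = 2/ln(1/(1-p))`, and `κf τ ~ τ/p` as `τ → ∞`. -/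
theorem stmt10 (p : ℝ) (hp0 : 0 < p) (hp1 : p < 1) (κf : ℝ → ℝ)
    (hκf : ∀ τ : ℝ, 0 ≤ τ → τ / p < κf τ ∧ κf τ / 2 * LambdaStar p (τ / κf τ) = 1)
    (hκuniq : ∀ τ : ℝ, 0 ≤ τ → ∀ κ : ℝ, τ / p < κ → κ / 2 * LambdaStar p (τ / κ) = 1 →
      κ = κf τ) :
    ContinuousOn κf (Set.Ici 0) ∧ StrictMonoOn κf (Set.Ici 0) ∧
      κf 0 = 2 / Real.log (1 / (1 - p)) ∧
      Tendsto (fun τ => p * κf τ / τ) atTop (nhds 1) := by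
  have hmono := strictMonoOn_of_kappaRate_eq_one hp0 hp1 hκf
  have hzero : κf 0 = 2 / log (1 / (1 - p)) := by
    have h := (hκf 0 le_rfl).2
    rw [zero_div, LambdaStar_zero] at h
    have hL : 0 < log (1 / (1 - p)) := LambdaStar_zero p ▸ LambdaStar_pos hp0 hp1 le_rfl hp0
    rw [eq_div_iff hL.ne']
    linear_combination 2 * h
  exact ⟨hmono.continuousOn_Ici_of_surjOn (surjOn_of_kappaRate_eq_one hp0 hp1 hκf hκuniq), hmono,
    hzero, tendsto_mul_div_of_kappaRate_eq_one hp0 hp1 hκf⟩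
end

section
/- Let 0 < p < 1, let n, k, t be nonnegative integers, and let A and B be k-element subsets of {1,…,n} with |A ∩ B| = ℓ. Then in the random graph G(n,p), Pr( both A and B are t-dependent ) ≤ (1−p)^{−ℓ(ℓ−1)/2} · Pr( A is t-dependent ) · Pr( B is t-dependent ). -/
open MeasureTheory Filter
open scoped ENNReal NNReal

/-! Let `D` be the set of pairs of distinct vertices of `A ∩ B`. Deleting the edges in `D` can
only help `B` to be `t`-dependent, and the relaxed event for `B` no longer looks at any pair inside
`A`, so it is independent of the event for `A`. It is also independent of the event that no pair
of `D` is an edge, which has probability `(1-p)^C(ℓ,2)`, and on that event it coincides with the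
event for `B`. -/

open ProbabilityTheory

section ProductMeasure

variable {ι : Type*} {Ω : ι → Type*}

lemma DependsOn.preimage_image_restrict {E : Set (∀ i, Ω i)} {s : Finset ι}
    (hE : DependsOn (· ∈ E) ↑s) :
    (fun x (i : s) => x i) ⁻¹' ((fun x (i : s) => x i) '' E) = E := by
  ext x
  refine ⟨fun ⟨y, hy, hyx⟩ => ?_, fun hx => ⟨x, hx, rfl⟩⟩
  exact (hE fun i hi => congrFun hyx ⟨i, hi⟩).mp hy

variable [Fintype ι] [∀ i, MeasurableSpace (Ω i)] [∀ i, MeasurableSingletonClass (Ω i)]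
  [∀ i, Countable (Ω i)] (μ : ∀ i, Measure (Ω i)) [∀ i, IsProbabilityMeasure (μ i)]

theorem MeasureTheory.Measure.pi_inter_eq_mul_of_dependsOn {s t : Finset ι} (hst : Disjoint s t)
    {E F : Set (∀ i, Ω i)} (hE : DependsOn (· ∈ E) ↑s) (hF : DependsOn (· ∈ F) ↑t) :
    Measure.pi μ (E ∩ F) = Measure.pi μ E * Measure.pi μ F := by
  have hcoord : iIndepFun (fun i (x : ∀ i, Ω i) => x i) (Measure.pi μ) :=
    iIndepFun_pi (X := fun i => (id : Ω i → Ω i)) fun _ => aemeasurable_id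
  have hindep := hcoord.indepFun_finset s t hst fun i => measurable_pi_apply i
  rw [← hE.preimage_image_restrict, ← hF.preimage_image_restrict]
  exact hindep.measure_inter_preimage_eq_mul _ _ (Set.to_countable _).measurableSet
    (Set.to_countable _).measurableSet

end ProductMeasure

lemma measure_inter_le_inv_mul_of_relaxation {Ω : Type*} [MeasurableSpace Ω] {μ : Measure Ω}
    {E₁ E₂ F Z : Set Ω} (hE₂F : E₂ ⊆ F) (hFZ : F ∩ Z ⊆ E₂)
    (hE₁F : μ (E₁ ∩ F) = μ E₁ * μ F) (hFZ' : μ (F ∩ Z) = μ F * μ Z)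
    (hZ₀ : μ Z ≠ 0) (hZ : μ Z ≠ ⊤) :
    μ (E₁ ∩ E₂) ≤ (μ Z)⁻¹ * (μ E₁ * μ E₂) := by
  have hF : μ F ≤ (μ Z)⁻¹ * μ E₂ := by
    rw [← ENNReal.div_eq_inv_mul, ENNReal.le_div_iff_mul_le (.inl hZ₀) (.inl hZ), ← hFZ']
    exact measure_mono hFZ
  calc μ (E₁ ∩ E₂)
      ≤ μ (E₁ ∩ F) := measure_mono (Set.inter_subset_inter_right _ hE₂F)
    _ = μ E₁ * μ F := hE₁F
    _ ≤ μ E₁ * ((μ Z)⁻¹ * μ E₂) := by gcongr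
    _ = (μ Z)⁻¹ * (μ E₁ * μ E₂) := by ring

lemma bernoulliBool_singleton_false (p : ℝ) :
    bernoulliBool p {false} = ENNReal.ofReal (1 - p) := by
  simp [bernoulliBool, ENNReal.ofReal]

lemma isProbabilityMeasure_bernoulliBool {p : ℝ} (hp0 : 0 ≤ p) (hp1 : p ≤ 1) :
    IsProbabilityMeasure (bernoulliBool p) := by
  constructor
  simp only [bernoulliBool, Measure.add_apply, Measure.smul_apply, measure_univ,
    ENNReal.smul_def, smul_eq_mul, mul_one]
  change ENNReal.ofReal p + ENNReal.ofReal (1 - p) = 1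
  rw [← ENNReal.ofReal_add hp0 (sub_nonneg.2 hp1), add_sub_cancel, ENNReal.ofReal_one]

def offDiagPairs {α : Type*} [DecidableEq α] (s : Finset α) : Finset (Sym2 α) :=
  s.offDiag.image Sym2.mk.uncurry

section OffDiagPairs

variable {α : Type*} [DecidableEq α]

@[simp]
lemma mk_mem_offDiagPairs {s : Finset α} {u v : α} :
    s(u, v) ∈ offDiagPairs s ↔ u ∈ s ∧ v ∈ s ∧ u ≠ v := by
  unfold offDiagPairs
  aesop

lemma offDiagPairs_inter (s t : Finset α) :
    offDiagPairs (s ∩ t) = offDiagPairs s ∩ offDiagPairs t := by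
  ext e
  induction e using Sym2.ind
  simp only [mk_mem_offDiagPairs, Finset.mem_inter]
  tauto

lemma disjoint_offDiagPairs_sdiff_inter (s t : Finset α) :
    Disjoint (offDiagPairs s) (offDiagPairs t \ offDiagPairs (s ∩ t)) := by
  rw [offDiagPairs_inter, Finset.sdiff_inter_self_right]
  exact Finset.disjoint_sdiff

lemma card_offDiagPairs (s : Finset α) : (offDiagPairs s).card = s.card.choose 2 :=
  Sym2.card_image_offDiag s

end OffDiagPairs

namespace SimpleGraph

variable {V : Type*}

def ofEdgeIndicator (f : Sym2 V → Bool) : SimpleGraph V :=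
  fromEdgeSet {e | f e = true}

@[simp]
lemma ofEdgeIndicator_adj {f : Sym2 V → Bool} {u v : V} :
    (ofEdgeIndicator f).Adj u v ↔ f s(u, v) = true ∧ u ≠ v :=
  fromEdgeSet_adj _

lemma ofEdgeIndicator_deleteEdges_of_eq_false {f : Sym2 V → Bool}
    {D : Set (Sym2 V)} (h : ∀ e ∈ D, f e = false) :
    (ofEdgeIndicator f).deleteEdges D = ofEdgeIndicator f := by
  ext u v
  simp only [deleteEdges_adj, ofEdgeIndicator_adj, and_iff_left_iff_imp]
  intro huv hD
  simp [h _ hD] at huv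

end SimpleGraph

open SimpleGraph

section TDependent

variable {V : Type*} {t : ℕ}

lemma isTDependent_congr {G H : SimpleGraph V} {S : Set V}
    (h : ∀ v ∈ S, ∀ u ∈ S, G.Adj v u ↔ H.Adj v u) :
    IsTDependent G t S ↔ IsTDependent H t S := by
  refine forall₂_congr fun v hv => ?_
  have hsep : {u ∈ S | G.Adj v u} = {u ∈ S | H.Adj v u} :=
    Set.sep_ext_iff.2 fun u hu => h v hv u hu
  rw [hsep]

lemma IsTDependent.anti {G H : SimpleGraph V} {S : Set V} (hGH : G ≤ H) (hS : S.Finite)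
    (h : IsTDependent H t S) : IsTDependent G t S := by
  intro v hv
  have hsub : {u ∈ S | G.Adj v u} ⊆ {u ∈ S | H.Adj v u} := fun _ hu => ⟨hu.1, hGH hu.2⟩
  exact (Set.ncard_le_ncard hsub (hS.subset (Set.sep_subset _ _))).trans (h v hv)

variable [DecidableEq V]

lemma dependsOn_isTDependent_deleteEdges (t : ℕ) (S : Finset V) (D : Finset (Sym2 V)) :
    DependsOn
      (fun f : Sym2 V → Bool => IsTDependent ((ofEdgeIndicator f).deleteEdges ↑D) t ↑S)
      ↑(offDiagPairs S \ D) := by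
  intro f g hfg
  refine propext (isTDependent_congr fun v hv u hu => ?_)
  simp only [deleteEdges_adj, ofEdgeIndicator_adj, Finset.mem_coe]
  by_cases huv : v = u
  · simp [huv]
  by_cases hD : s(v, u) ∈ D
  · simp [hD]
  rw [hfg _ (by simp_all)]

end TDependent

lemma Set.dependsOn_mem_pi {ι : Type*} {α : ι → Type*} (s : Set ι) (u : ∀ i, Set (α i)) :
    DependsOn (· ∈ s.pi u) s := fun x y h =>
  propext (forall₂_congr fun i hi => by rw [h i hi])

lemma erMeasure_apply (n : ℕ) (p : ℝ) (S : Set (SimpleGraph (Fin n))) :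
    erMeasure n p S = Measure.pi (fun _ => bernoulliBool p) (ofEdgeIndicator ⁻¹' S) :=
  Measure.map_apply (measurable_of_countable _) MeasurableSpace.measurableSet_top

theorem stmt19_general (p : ℝ) (hp0 : 0 < p) (hp1 : p < 1) (n t ℓ : ℕ)
    (A B : Finset (Fin n)) (hAB : (A ∩ B).card = ℓ) :
    erMeasure n p {G | IsTDependent G t ↑A ∧ IsTDependent G t ↑B}
      ≤ ENNReal.ofReal (((1 - p) ^ ℓ.choose 2)⁻¹) *
          (erMeasure n p {G | IsTDependent G t ↑A} * erMeasure n p {G | IsTDependent G t ↑B}) := by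
  have := isProbabilityMeasure_bernoulliBool hp0.le hp1.le
  set D := offDiagPairs (A ∩ B)
  set Z : Set (Sym2 (Fin n) → Bool) := (↑D : Set (Sym2 (Fin n))).pi fun _ => {false}
  have hpos : 0 < (1 - p) ^ ℓ.choose 2 := pow_pos (sub_pos.2 hp1) _
  have hZ : Measure.pi (fun _ => bernoulliBool p) Z = ENNReal.ofReal ((1 - p) ^ ℓ.choose 2) := by
    rw [Measure.pi_pi_finset, Finset.prod_const, bernoulliBool_singleton_false,
      card_offDiagPairs, hAB, ENNReal.ofReal_pow (sub_pos.2 hp1).le]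
  rw [Set.ofPred_and, erMeasure_apply, erMeasure_apply, erMeasure_apply, Set.preimage_inter,
    ENNReal.ofReal_inv_of_pos hpos, ← hZ]
  refine measure_inter_le_inv_mul_of_relaxation
    (F := {f | IsTDependent ((ofEdgeIndicator f).deleteEdges ↑D) t ↑B})
    (fun f hf => ?_) (fun f ⟨hf, hfZ⟩ => ?_) ?_ ?_
    (by rw [hZ]; exact (ENNReal.ofReal_pos.2 hpos).ne') (by rw [hZ]; exact ENNReal.ofReal_ne_top)
  · exact IsTDependent.anti (deleteEdges_le _) B.finite_toSet hf
  · rwa [Set.mem_preimage, Set.mem_ofPred_eq,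
      ← ofEdgeIndicator_deleteEdges_of_eq_false (D := (D : Set (Sym2 (Fin n)))) hfZ]
  · exact Measure.pi_inter_eq_mul_of_dependsOn _ (disjoint_offDiagPairs_sdiff_inter A B)
      (by simpa using dependsOn_isTDependent_deleteEdges t A ∅)
      (dependsOn_isTDependent_deleteEdges t B D)
  · exact Measure.pi_inter_eq_mul_of_dependsOn _ Finset.sdiff_disjoint
      (dependsOn_isTDependent_deleteEdges t B D) (Set.dependsOn_mem_pi _ _)

/-- For `0 < p < 1`, `k`-element subsets `A, B` of the vertex set of
`G(n,p)` with `|A ∩ B| = ℓ`, the probability that both `A` and `B` are `t`-dependent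
is at most `(1-p)^{-ℓ(ℓ-1)/2}` times the product of the individual probabilities
(note `ℓ(ℓ-1)/2 = C(ℓ,2)`). -/
theorem stmt19 (p : ℝ) (hp0 : 0 < p) (hp1 : p < 1) (n k t ℓ : ℕ)
    (A B : Finset (Fin n)) (hA : A.card = k) (hB : B.card = k) (hAB : (A ∩ B).card = ℓ) :
    erMeasure n p {G | IsTDependent G t ↑A ∧ IsTDependent G t ↑B}
      ≤ ENNReal.ofReal (((1 - p) ^ ℓ.choose 2)⁻¹) *
          (erMeasure n p {G | IsTDependent G t ↑A} * erMeasure n p {G | IsTDependent G t ↑B}) :=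
  stmt19_general p hp0 hp1 n t ℓ A B hAB
end
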